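/- Let G be a graph with distinct vertices s, t ∈ V(G) and let k be an integer with 0 ≤ k ≤ κ_{G−E(s,t)}(s,t), where κ_{G−E(s,t)}(s,t) is the minimum number of vertices separating s and t in the graph obtained from G by deleting all edges joining s and t. Then there exists a unique integer l_k such that (k, l_k) is a connectivity pair for s and t in G. Moreover, if there exists an s-t disconnecting pair in G of order k and size l, then the unique such l_k satisfies l_k ≤ l. -/

import Mathlib

/-!
Let `λ_k` be the least size of an `s`-`t` disconnecting pair of order `k`. If `(W, F)` is a
disconnecting pair with `|W| < κ_{G - E(s, t)}(s, t)`, some `s`-`t` path of `G - E(s, t)` avoids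
`W`, so it crosses `F` in an edge having an end `x ∉ {s, t} ∪ W`; moving `x` into `W` and
dropping the edges at `x` from `F` raises the order by one and lowers the size by at least one.
Hence a pair of order `j ≤ k` lifts to one of order `k` whose size is smaller by at least
`k - j`, so no pair of order at most `k` has cardinality below `k + λ_k`, and `(k, l)` is a
connectivity pair exactly when `l = λ_k`.
-/


/-- A multigraph on vertex type `V` with edges drawn from `E`: each edge `e` in the
edge set joins the two (distinct) vertices of `ends e`.  Parallel edges are allowed,
loops are not. -/
structure Multigraph (V : Type) (E : Type) where
  edgeSet : Set E
  ends : E → Sym2 V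
  no_loops : ∀ e ∈ edgeSet, ¬ (ends e).IsDiag

namespace Multigraph

variable {V E : Type}

/-- Walks in a multigraph. -/
inductive Walk (G : Multigraph V E) : V → V → Type
  | nil (v : V) : Walk G v v
  | cons {u v w : V} (e : E) (he : e ∈ G.edgeSet) (huv : G.ends e = s(u, v))
      (p : Walk G v w) : Walk G u w

namespace Walk

variable {G : Multigraph V E}

/-- The list of vertices visited by a walk. -/
def support : {u v : V} → G.Walk u v → List V
  | u, _, .nil _ => [u]
  | u, _, .cons _ _ _ p => u :: p.support

/-- The list of edges used by a walk. -/
def edges : {u v : V} → G.Walk u v → List E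
  | _, _, .nil _ => []
  | _, _, .cons e _ _ p => e :: p.edges

/-- A walk is a path if it visits no vertex twice. -/
def IsPath {u v : V} (p : G.Walk u v) : Prop := p.support.Nodup

end Walk

/-- Two walks are edge-disjoint if they share no edge. -/
def EdgeDisjoint {G : Multigraph V E} {u₁ v₁ u₂ v₂ : V}
    (p : G.Walk u₁ v₁) (q : G.Walk u₂ v₂) : Prop :=
  ∀ e, e ∈ p.edges → e ∉ q.edges

/-- Two `s`-`t` walks are internally disjoint if they share no vertices other
than `s` and `t`. -/
def InternallyDisjoint {G : Multigraph V E} {s t : V}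
    (p q : G.Walk s t) : Prop :=
  ∀ v, v ∈ p.support → v ∈ q.support → v = s ∨ v = t


/-- `(W, F)` is an `s`-`t` disconnecting pair: `W` is a set of vertices avoiding `s`
and `t`, `F` is a set of edges of `G`, and `G - W - F` contains no `s`-`t` path. -/
def DisconnectingPair (G : Multigraph V E) (s t : V) (W : Finset V) (F : Finset E) : Prop :=
  (↑W : Set V) ⊆ ({s, t} : Set V)ᶜ ∧ (↑F : Set E) ⊆ G.edgeSet ∧
    ∀ p : G.Walk s t, (∃ x ∈ p.support, x ∈ W) ∨ ∃ e ∈ p.edges, e ∈ F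

/-- `(k, l)` is a connectivity pair for `s` and `t` in `G`: there is an `s`-`t`
disconnecting pair of order `k` and size `l`, but none of cardinality less than
`k + l` having order at most `k` and size at most `l`. -/
def ConnectivityPair (G : Multigraph V E) (s t : V) (k l : ℕ) : Prop :=
  (∃ (W : Finset V) (F : Finset E), G.DisconnectingPair s t W F ∧ W.card = k ∧ F.card = l) ∧
    ¬ ∃ (W : Finset V) (F : Finset E), G.DisconnectingPair s t W F ∧
        W.card + F.card < k + l ∧ W.card ≤ k ∧ F.card ≤ l

/-- Delete a set of edges from a multigraph. -/
def deleteEdges (G : Multigraph V E) (F : Set E) : Multigraph V E :=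
  ⟨G.edgeSet \ F, G.ends, fun e he => G.no_loops e he.1⟩

end Multigraph

namespace Multigraph

variable {V E : Type} {G : Multigraph V E} {s t : V}

namespace Walk

theorem start_mem_support : ∀ {u v : V} (p : G.Walk u v), u ∈ p.support
  | _, _, .nil _ => List.mem_singleton_self _
  | _, _, .cons _ _ _ _ => List.mem_cons_self ..

theorem mem_support_of_mem_edges {x : V} :
    ∀ {u v : V} (p : G.Walk u v) {e : E}, e ∈ p.edges → x ∈ G.ends e → x ∈ p.support
  | _, _, .nil _, _, he, _ => by simp [edges] at he
  | _, _, .cons e' _ h q, e, he, hx => by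
    simp only [edges, List.mem_cons] at he
    simp only [support, List.mem_cons]
    rcases he with rfl | he
    · rw [h, Sym2.mem_iff] at hx
      rcases hx with rfl | rfl
      · exact Or.inl rfl
      · exact Or.inr q.start_mem_support
    · exact Or.inr (q.mem_support_of_mem_edges he hx)

theorem mem_edgeSet_of_mem_edges :
    ∀ {u v : V} (p : G.Walk u v) {e : E}, e ∈ p.edges → e ∈ G.edgeSet
  | _, _, .nil _, _, he => by simp [edges] at he
  | _, _, .cons _ he' _ q, _, he => by
    simp only [edges, List.mem_cons] at he
    rcases he with rfl | he
    · exact he'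
    · exact q.mem_edgeSet_of_mem_edges he

def ofDeleteEdges {F : Set E} : ∀ {u v : V}, (G.deleteEdges F).Walk u v → G.Walk u v
  | _, _, .nil v => .nil v
  | _, _, .cons e he h p => .cons e he.1 h p.ofDeleteEdges

@[simp]
theorem support_ofDeleteEdges {F : Set E} :
    ∀ {u v : V} (p : (G.deleteEdges F).Walk u v), p.ofDeleteEdges.support = p.support
  | _, _, .nil _ => rfl
  | _, _, .cons _ _ _ p => congrArg _ p.support_ofDeleteEdges

@[simp]
theorem edges_ofDeleteEdges {F : Set E} :
    ∀ {u v : V} (p : (G.deleteEdges F).Walk u v), p.ofDeleteEdges.edges = p.edges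
  | _, _, .nil _ => rfl
  | _, _, .cons _ _ _ p => congrArg _ p.edges_ofDeleteEdges

end Walk

/-- The paper's `E(s, t)`. -/
def edgesBetween (G : Multigraph V E) (s t : V) : Set E :=
  {e ∈ G.edgeSet | G.ends e = s(s, t)}

/-- `κ_H(s, t)`; it is `sInf ∅ = 0` when no vertex set separates `s` from `t`. -/
noncomputable def localVertexConnectivity (H : Multigraph V E) (s t : V) : ℕ :=
  sInf {n | ∃ W : Finset V, (↑W : Set V) ⊆ ({s, t} : Set V)ᶜ ∧ W.card = n ∧
    ∀ p : H.Walk s t, ∃ x ∈ p.support, x ∈ W}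

theorem exists_walk_avoiding_of_card_lt {H : Multigraph V E} {W : Finset V}
    (hW : (↑W : Set V) ⊆ ({s, t} : Set V)ᶜ) (hlt : W.card < H.localVertexConnectivity s t) :
    ∃ p : H.Walk s t, ∀ x ∈ p.support, x ∉ W := by
  by_contra! h
  exact hlt.not_ge (Nat.sInf_le ⟨W, hW, rfl, h⟩)

theorem exists_mem_ends_notMem_of_notMem_edgesBetween {e : E} (he : e ∈ G.edgeSet)
    (hne : e ∉ G.edgesBetween s t) : ∃ x ∈ G.ends e, x ∉ ({s, t} : Set V) := by
  by_contra! h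
  induction hz : G.ends e using Sym2.ind with
  | h u v =>
    have hu : u = s ∨ u = t := h u (hz ▸ Sym2.mem_mk_left u v)
    have hv : v = s ∨ v = t := h v (hz ▸ Sym2.mem_mk_right u v)
    have huv : u ≠ v := by simpa [hz] using G.no_loops e he
    apply hne ⟨he, hz.trans ?_⟩
    rcases hu with rfl | rfl <;> rcases hv with rfl | rfl
    all_goals first | exact absurd rfl huv | rfl | exact Sym2.eq_swap

theorem exists_disconnectingPair_empty [Finite E] (hst : s ≠ t) :
    ∃ F : Finset E, G.DisconnectingPair s t ∅ F := by
  have := Fintype.ofFinite E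
  classical
  refine ⟨G.edgeSet.toFinset, by simp, by simp, fun p => ?_⟩
  cases p with
  | nil => exact absurd rfl hst
  | cons e he _ _ => exact Or.inr ⟨e, List.mem_cons_self .., Set.mem_toFinset.2 he⟩

namespace DisconnectingPair

variable {W : Finset V} {F : Finset E}

theorem insert_filter [DecidableEq V] (h : G.DisconnectingPair s t W F) {x : V}
    (hx : x ∉ ({s, t} : Set V)) :
    G.DisconnectingPair s t (insert x W) (F.filter fun e => x ∉ G.ends e) := by
  refine ⟨?_, fun e he => h.2.1 (Finset.mem_filter.1 he).1, fun p => ?_⟩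
  · rw [Finset.coe_insert]
    exact Set.insert_subset hx h.1
  rcases h.2.2 p with ⟨y, hy, hyW⟩ | ⟨e, he, heF⟩
  · exact Or.inl ⟨y, hy, Finset.mem_insert_of_mem hyW⟩
  by_cases hxp : x ∈ p.support
  · exact Or.inl ⟨x, hxp, Finset.mem_insert_self x W⟩
  · refine Or.inr ⟨e, he, Finset.mem_filter.2 ⟨heF, fun hxe => ?_⟩⟩
    exact hxp (p.mem_support_of_mem_edges he hxe)

theorem exists_card_succ (h : G.DisconnectingPair s t W F)
    (hW : W.card < (G.deleteEdges (G.edgesBetween s t)).localVertexConnectivity s t) :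
    ∃ (W' : Finset V) (F' : Finset E),
      G.DisconnectingPair s t W' F' ∧ W'.card = W.card + 1 ∧ F'.card < F.card := by
  classical
  obtain ⟨p, hp⟩ := exists_walk_avoiding_of_card_lt h.1 hW
  obtain ⟨y, hy, hyW⟩ | ⟨e, he, heF⟩ := h.2.2 p.ofDeleteEdges
  · exact absurd hyW (hp y (by simpa using hy))
  rw [Walk.edges_ofDeleteEdges] at he
  have he' : e ∈ G.edgeSet \ G.edgesBetween s t := p.mem_edgeSet_of_mem_edges he
  obtain ⟨x, hxe, hx⟩ := exists_mem_ends_notMem_of_notMem_edgesBetween he'.1 he'.2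
  refine ⟨_, _, h.insert_filter hx, ?_, ?_⟩
  · exact Finset.card_insert_of_notMem (hp x (p.mem_support_of_mem_edges he hxe))
  · exact Finset.card_lt_card (Finset.filter_ssubset.2 ⟨e, heF, not_not.2 hxe⟩)

theorem exists_card_eq (h : G.DisconnectingPair s t W F) {k : ℕ} (hWk : W.card ≤ k)
    (hk : k ≤ (G.deleteEdges (G.edgesBetween s t)).localVertexConnectivity s t) :
    ∃ (W' : Finset V) (F' : Finset E),
      G.DisconnectingPair s t W' F' ∧ W'.card = k ∧ F'.card + (k - W.card) ≤ F.card := by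
  induction k, hWk using Nat.le_induction with
  | base => exact ⟨W, F, h, rfl, by simp⟩
  | succ n _ ih =>
    obtain ⟨W₁, F₁, h₁, hW₁, hF₁⟩ := ih (by omega)
    obtain ⟨W₂, F₂, h₂, hW₂, hF₂⟩ := h₁.exists_card_succ (by omega)
    exact ⟨W₂, F₂, h₂, by omega, by omega⟩

end DisconnectingPair

def disconnectingSizes (G : Multigraph V E) (s t : V) (k : ℕ) : Set ℕ :=
  {l | ∃ (W : Finset V) (F : Finset E), G.DisconnectingPair s t W F ∧ W.card = k ∧ F.card = l}

theorem disconnectingSizes_nonempty [Finite E] (hst : s ≠ t) {k : ℕ}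
    (hk : k ≤ (G.deleteEdges (G.edgesBetween s t)).localVertexConnectivity s t) :
    (G.disconnectingSizes s t k).Nonempty := by
  obtain ⟨F, hF⟩ := exists_disconnectingPair_empty (G := G) hst
  obtain ⟨W', F', h', hW', -⟩ := hF.exists_card_eq (Nat.zero_le k) hk
  exact ⟨F'.card, W', F', h', hW', rfl⟩

theorem ConnectivityPair.isLeast {k l : ℕ} (h : G.ConnectivityPair s t k l) :
    IsLeast (G.disconnectingSizes s t k) l := by
  refine ⟨h.1, fun l' ⟨W, F, hWF, hW, hF⟩ => ?_⟩
  by_contra! hlt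
  exact h.2 ⟨W, F, hWF, by omega, hW.le, by omega⟩

theorem connectivityPair_iff_isLeast {k l : ℕ}
    (hk : k ≤ (G.deleteEdges (G.edgesBetween s t)).localVertexConnectivity s t) :
    G.ConnectivityPair s t k l ↔ IsLeast (G.disconnectingSizes s t k) l := by
  refine ⟨ConnectivityPair.isLeast, fun hl => ⟨hl.1, ?_⟩⟩
  rintro ⟨W, F, hWF, hlt, hWk, -⟩
  obtain ⟨W', F', h', hW', hF'⟩ := hWF.exists_card_eq hWk hk
  have := hl.2 ⟨W', F', h', hW', rfl⟩
  omega

end Multigraph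

open Multigraph in
theorem second_coordinate_unique_general {V E : Type} [Fintype E]
    (G : Multigraph V E) (s t : V) (hst : s ≠ t) (k : ℕ)
    (hk : k ≤ sInf {n | ∃ W : Finset V, (↑W : Set V) ⊆ ({s, t} : Set V)ᶜ ∧ W.card = n ∧
      ∀ p : (G.deleteEdges {e ∈ G.edgeSet | G.ends e = s(s, t)}).Walk s t,
        ∃ x ∈ p.support, x ∈ W}) :
    (∃! l : ℕ, G.ConnectivityPair s t k l) ∧
    ∀ lk l : ℕ, G.ConnectivityPair s t k lk →
      (∃ (W : Finset V) (F : Finset E),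
        G.DisconnectingPair s t W F ∧ W.card = k ∧ F.card = l) →
      lk ≤ l := by
  have hk' : k ≤ (G.deleteEdges (G.edgesBetween s t)).localVertexConnectivity s t := hk
  have hleast := isLeast_csInf (disconnectingSizes_nonempty hst hk')
  refine ⟨⟨_, (connectivityPair_iff_isLeast hk').2 hleast, fun l hl => ?_⟩, ?_⟩
  · exact ((connectivityPair_iff_isLeast hk').1 hl).unique hleast
  · exact fun lk l hlk hl => hlk.isLeast.2 hl

open Multigraph in
/-- For `0 ≤ k ≤ κ_{G - E(s, t)}(s, t)` there is a unique `l` such that `(k, l)` is a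
connectivity pair for `s` and `t` in `G`; moreover, if there is an `s`-`t`
disconnecting pair of order `k` and size `l`, then this unique value is at most `l`. -/
theorem second_coordinate_unique {V E : Type} [Fintype V] [Fintype E]
    (G : Multigraph V E) (s t : V) (hst : s ≠ t) (k : ℕ)
    (hk : k ≤ sInf {n | ∃ W : Finset V, (↑W : Set V) ⊆ ({s, t} : Set V)ᶜ ∧ W.card = n ∧
      ∀ p : (G.deleteEdges {e ∈ G.edgeSet | G.ends e = s(s, t)}).Walk s t,
        ∃ x ∈ p.support, x ∈ W}) :
    (∃! l : ℕ, G.ConnectivityPair s t k l) ∧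
    ∀ lk l : ℕ, G.ConnectivityPair s t k lk →
      (∃ (W : Finset V) (F : Finset E),
        G.DisconnectingPair s t W F ∧ W.card = k ∧ F.card = l) →
      lk ≤ l :=
  second_coordinate_unique_general G s t hst k hk
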